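/- Let (L,Q) be a unimodular lattice of signature (1,N) with 2 ≤ N ≤ 8, and fix a basis identifying (L,Q) with ⟨1⟩ ⊕ N⟨−1⟩. Then for any primitive isotropic vector w ∈ L there exists f ∈ O(L,Q) with f(w) = v, where v = H − E₁ in the standard orthogonal basis {H, E₁, …, E_N} (Q(H,H)=1, Q(Eᵢ,Eᵢ)=−1). In other words, O(L,Q) acts transitively on primitive isotropic vectors. -/

import Mathlib

/-!
Vinberg's reflection descent. After sign changes and a permutation of `E₁, …, E_N`, a primitive
isotropic `w` has `w₀ > 0` and `w₁ ≥ w₂ ≥ ⋯ ≥ w_N ≥ 0`. The reflection in the root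
`H + E₁ + E₂ + E₃` (norm `-2`; for `N = 2` in `H + E₁ + E₂`, norm `-1`) replaces `w₀` by
`2w₀ - (w₁ + w₂ + w₃)` (resp. `3w₀ - 2(w₁ + w₂)`), which is smaller in absolute value unless
`w = w₀ (H + E₁)`. For `N ≥ 3` this is where `N ≤ 8` enters: `w₀² = ∑ wᵢ² ≤ w₁² + w₂² + (N - 2) w₃²`
with `N - 2 ≤ 6` rules out `w₁ + w₂ + w₃ ≤ w₀` in all other cases. Primitivity forces `w₀ = 1` at the
end of the descent, and changing the sign of `E₁` sends `H + E₁` to `H - E₁`.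
-/

/-- The standard bilinear form of signature `(1, N)` on `ℤ^{N+1}`,
i.e. the intersection form `⟨1⟩ ⊕ N⟨−1⟩` in the basis `{H, E₁, …, E_N}`. -/
def QZ (N : ℕ) (x y : Fin (N + 1) → ℤ) : ℤ :=
  x 0 * y 0 - ∑ i : Fin N, x i.succ * y i.succ

open LinearMap

variable {N : ℕ}

def bilinQZ (N : ℕ) : LinearMap.BilinForm ℤ (Fin (N + 1) → ℤ) :=
  mk₂ ℤ (QZ N)
    (fun x x' y => by simp only [QZ, Pi.add_apply, add_mul, Finset.sum_add_distrib]; ring)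
    (fun c x y => by simp only [QZ, Pi.smul_apply, smul_eq_mul, mul_sub, Finset.mul_sum, mul_assoc])
    (fun x y y' => by simp only [QZ, Pi.add_apply, mul_add, Finset.sum_add_distrib]; ring)
    (fun c x y => by simp only [QZ, Pi.smul_apply, smul_eq_mul, mul_sub, Finset.mul_sum, mul_left_comm])

@[simp]
lemma bilinQZ_apply (x y : Fin (N + 1) → ℤ) : bilinQZ N x y = QZ N x y := rfl

lemma isSymm_bilinQZ : LinearMap.IsSymm (bilinQZ N) :=
  ⟨fun x y => by simp [QZ, mul_comm]⟩

lemma QZ_self_eq_zero_iff (w : Fin (N + 1) → ℤ) :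
    QZ N w w = 0 ↔ w 0 ^ 2 = ∑ i : Fin N, w i.succ ^ 2 := by
  simp only [QZ, sq, sub_eq_zero]

lemma apply_zero_ne_zero_of_QZ_self_eq_zero {w : Fin (N + 1) → ℤ} (hw : QZ N w w = 0)
    (hw₀ : w ≠ 0) : w 0 ≠ 0 := by
  contrapose! hw₀
  rw [QZ_self_eq_zero_iff, hw₀, eq_comm, zero_pow two_ne_zero,
    Finset.sum_eq_zero_iff_of_nonneg fun i _ => sq_nonneg _] at hw
  ext i
  cases i using Fin.cases with
  | zero => exact hw₀
  | succ j => simpa using hw j (Finset.mem_univ j)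

def IsPrimitive {R M : Type*} [Monoid R] [SMul R M] (w : M) : Prop :=
  ∀ (a : R) (x : M), a • x = w → IsUnit a

lemma IsPrimitive.map {R M M' : Type*} [Semiring R] [AddCommMonoid M] [AddCommMonoid M']
    [Module R M] [Module R M'] {w : M} (hw : IsPrimitive (R := R) w) (f : M ≃ₗ[R] M') :
    IsPrimitive (R := R) (f w) := fun a x h =>
  hw a (f.symm x) (by rw [← f.symm.map_smul, h, f.symm_apply_apply])

lemma IsPrimitive.ne_zero {R M : Type*} [Semiring R] [Nontrivial R] [AddCommMonoid M] [Module R M]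
    {w : M} (hw : IsPrimitive (R := R) w) : w ≠ 0 := by
  rintro rfl
  exact not_isUnit_zero (hw 0 0 (smul_zero 0))

def SameOrbit (N : ℕ) (w v : Fin (N + 1) → ℤ) : Prop :=
  ∃ f : (Fin (N + 1) → ℤ) ≃ₗ[ℤ] (Fin (N + 1) → ℤ), (bilinQZ N).IsOrthogonal f ∧ f w = v

lemma SameOrbit.of_isOrthogonal {f : (Fin (N + 1) → ℤ) ≃ₗ[ℤ] (Fin (N + 1) → ℤ)}
    (hf : (bilinQZ N).IsOrthogonal f) {w v : Fin (N + 1) → ℤ} (h : SameOrbit N (f w) v) :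
    SameOrbit N w v := by
  obtain ⟨g, hg, rfl⟩ := h
  exact ⟨f.trans g, fun x y => (hg _ _).trans (hf x y), rfl⟩

def signFlip (ε : Fin (N + 1) → ℤˣ) : (Fin (N + 1) → ℤ) ≃ₗ[ℤ] (Fin (N + 1) → ℤ) :=
  LinearEquiv.piCongrRight fun i => LinearEquiv.smulOfUnit (ε i)

@[simp]
lemma signFlip_apply (ε : Fin (N + 1) → ℤˣ) (x : Fin (N + 1) → ℤ) (i : Fin (N + 1)) :
    signFlip ε x i = ε i • x i := rfl

lemma isOrthogonal_signFlip (ε : Fin (N + 1) → ℤˣ) : (bilinQZ N).IsOrthogonal (signFlip ε) := by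
  intro x y
  simp only [bilinQZ_apply, QZ, signFlip_apply, Units.smul_def, smul_eq_mul, mul_mul_mul_comm,
    Int.units_coe_mul_self, one_mul]

def permuteE (σ : Equiv.Perm (Fin N)) : (Fin (N + 1) → ℤ) ≃ₗ[ℤ] (Fin (N + 1) → ℤ) :=
  LinearEquiv.funCongrLeft ℤ ℤ (Equiv.Perm.decomposeFin.symm (0, σ))

@[simp]
lemma permuteE_apply_zero (σ : Equiv.Perm (Fin N)) (x : Fin (N + 1) → ℤ) :
    permuteE σ x 0 = x 0 := by
  simp [permuteE, LinearEquiv.funCongrLeft_apply]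

@[simp]
lemma permuteE_apply_succ (σ : Equiv.Perm (Fin N)) (x : Fin (N + 1) → ℤ) (j : Fin N) :
    permuteE σ x j.succ = x (σ j).succ := by
  simp [permuteE, LinearEquiv.funCongrLeft_apply]

lemma isOrthogonal_permuteE (σ : Equiv.Perm (Fin N)) : (bilinQZ N).IsOrthogonal (permuteE σ) := by
  intro x y
  simp only [bilinQZ_apply, QZ, permuteE_apply_zero, permuteE_apply_succ]
  rw [Equiv.sum_comp σ fun i => x i.succ * y i.succ]

/-- The reflection `x ↦ x - (2 QZ(x, r) / QZ(r, r)) • r`, with the division cleared. -/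
lemma exists_isOrthogonal_mul_apply_zero {r : Fin (N + 1) → ℤ} (hr : QZ N r r ∣ 2)
    (hr₀ : r 0 = 1) (u : Fin (N + 1) → ℤ) :
    ∃ f : (Fin (N + 1) → ℤ) ≃ₗ[ℤ] (Fin (N + 1) → ℤ), (bilinQZ N).IsOrthogonal f ∧
      QZ N r r * f u 0 = QZ N r r * u 0 - 2 * QZ N r u := by
  have hx := IsReflective.of_dvd_two (bilinQZ N) hr
  refine ⟨Module.reflection hx.coroot_apply_self, hx.isOrthogonal_reflection _ isSymm_bilinQZ, ?_⟩
  rw [Module.reflection_apply, Pi.sub_apply, Pi.smul_apply, hr₀, smul_eq_mul, mul_one, mul_sub]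
  exact congrArg (_ - ·) hx.apply_self_mul_coroot_apply

lemma exists_units_smul_eq_abs (x : ℤ) : ∃ ε : ℤˣ, ε • x = |x| := by
  rcases abs_choice x with h | h
  · exact ⟨1, by rw [one_smul, h]⟩
  · exact ⟨-1, by rw [Units.neg_smul, one_smul, h]⟩

lemma exists_isOrthogonal_normalize (w : Fin (N + 1) → ℤ) :
    ∃ f : (Fin (N + 1) → ℤ) ≃ₗ[ℤ] (Fin (N + 1) → ℤ), (bilinQZ N).IsOrthogonal f ∧
      f w 0 = |w 0| ∧ (∀ j : Fin N, 0 ≤ f w j.succ) ∧ Antitone fun j : Fin N => f w j.succ := by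
  set σ := Tuple.sort fun j : Fin N => -|w j.succ|
  choose ε hε using fun i => exists_units_smul_eq_abs (permuteE σ w i)
  refine ⟨(permuteE σ).trans (signFlip ε),
    fun x y => (isOrthogonal_signFlip ε _ _).trans (isOrthogonal_permuteE σ x y), ?_, ?_, ?_⟩
  · simpa using hε 0
  · intro j
    simp only [LinearEquiv.trans_apply, signFlip_apply, hε]
    exact abs_nonneg _
  · have := (Tuple.monotone_sort fun j : Fin N => -|w j.succ|).neg
    intro j k hjk
    simp only [LinearEquiv.trans_apply, signFlip_apply, hε]
    simpa using this hjk

lemma abs_three_mul_sub_two_mul_lt_or_eq {a₀ a₁ a₂ : ℤ} (h₀ : 0 < a₀) (h₁₂ : a₂ ≤ a₁) (h₂ : 0 ≤ a₂)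
    (h : a₀ ^ 2 = a₁ ^ 2 + a₂ ^ 2) :
    |3 * a₀ - 2 * (a₁ + a₂)| < a₀ ∨ a₁ = a₀ ∧ a₂ = 0 := by
  by_cases hlow : a₀ < a₁ + a₂
  · left
    rw [abs_lt]
    constructor <;> nlinarith
  · right
    have ha₂ : a₂ = 0 := by nlinarith
    subst ha₂
    constructor <;> nlinarith

lemma abs_two_mul_sub_lt_or_eq {a₀ a₁ a₂ a₃ t : ℤ} (h₀ : 0 < a₀) (h₁₂ : a₂ ≤ a₁) (h₂₃ : a₃ ≤ a₂)
    (h₃ : 0 ≤ a₃) (ht : 0 ≤ t) (ht₅ : t ≤ 5 * a₃ ^ 2) (h : a₀ ^ 2 = a₁ ^ 2 + a₂ ^ 2 + a₃ ^ 2 + t) :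
    |2 * a₀ - (a₁ + a₂ + a₃)| < a₀ ∨ a₁ = a₀ ∧ a₂ = 0 := by
  by_cases hlow : a₀ < a₁ + a₂ + a₃
  · left
    rw [abs_lt]
    constructor <;> nlinarith
  · right
    have ha₂ : a₂ = 0 := by nlinarith
    have ha₃ : a₃ = 0 := by omega
    subst ha₂ ha₃
    constructor <;> nlinarith

def hSubE₁ (N : ℕ) : Fin (N + 1) → ℤ := fun i => if i = 0 then 1 else if i = 1 then -1 else 0

def hAddE₁ (N : ℕ) : Fin (N + 1) → ℤ := fun i => if i = 0 then 1 else if i = 1 then 1 else 0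

lemma sameOrbit_hAddE₁_hSubE₁ (hN : 1 ≤ N) : SameOrbit N (hAddE₁ N) (hSubE₁ N) := by
  have h01 : (0 : Fin (N + 1)) ≠ 1 := by
    rw [Ne, Fin.ext_iff, Fin.val_zero, Fin.val_one', Nat.one_mod_eq_one.2 (by omega)]
    omega
  refine ⟨signFlip fun i => if i = 1 then -1 else 1, isOrthogonal_signFlip _, ?_⟩
  ext i
  by_cases h0 : i = 0
  · subst h0; simp [hAddE₁, hSubE₁, h01]
  · by_cases h1 : i = 1 <;> simp [hAddE₁, hSubE₁, h0, h1, h01.symm]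

lemma eq_smul_hAddE₁ {m : ℕ} {u : Fin (m + 3) → ℤ} (hpos : ∀ j : Fin (m + 2), 0 ≤ u j.succ)
    (hanti : Antitone fun j : Fin (m + 2) => u j.succ) (h₁ : u 1 = u 0) (h₂ : u 2 = 0) :
    u = u 0 • hAddE₁ (m + 2) := by
  ext i
  cases i using Fin.cases with
  | zero => simp [hAddE₁]
  | succ j =>
    cases j using Fin.cases with
    | zero => simpa [hAddE₁] using h₁
    | succ k =>
      have hk : u k.succ.succ ≤ u (1 : Fin (m + 2)).succ := hanti (by simp [Fin.le_iff_val_le_val])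
      have hk1 : k.succ.succ ≠ 1 := by
        rw [← Fin.succ_zero_eq_one, Ne, Fin.succ_inj]
        exact Fin.succ_ne_zero k
      rw [Fin.succ_one_eq_two, h₂] at hk
      simp only [Pi.smul_apply, hAddE₁, Fin.succ_ne_zero, hk1, if_false, smul_zero]
      exact le_antisymm hk (hpos _)

lemma exists_descent_two {u : Fin 3 → ℤ} (hu : QZ 2 u u = 0) (h₀ : 0 < u 0)
    (hpos : ∀ j : Fin 2, 0 ≤ u j.succ) (hanti : Antitone fun j : Fin 2 => u j.succ) :
    (∃ f : (Fin 3 → ℤ) ≃ₗ[ℤ] (Fin 3 → ℤ), (bilinQZ 2).IsOrthogonal f ∧ |f u 0| < u 0) ∨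
      u = u 0 • hAddE₁ 2 := by
  rw [QZ_self_eq_zero_iff, Fin.sum_univ_two] at hu
  rcases abs_three_mul_sub_two_mul_lt_or_eq h₀ (hanti (Fin.zero_le 1)) (hpos 1) hu with
    hlt | ⟨h₁, h₂⟩
  · have hrr : QZ 2 ![1, 1, 1] ![1, 1, 1] = -1 := by decide
    have hru : QZ 2 ![1, 1, 1] u = u 0 - (u 1 + u 2) := by simp [QZ, Fin.sum_univ_two]
    obtain ⟨f, hf, hfu⟩ := exists_isOrthogonal_mul_apply_zero (by rw [hrr]; decide) rfl u
    rw [hrr, hru] at hfu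
    simp only [Fin.succ_zero_eq_one, Fin.succ_one_eq_two] at hlt
    exact Or.inl ⟨f, hf, by rwa [show f u 0 = 3 * u 0 - 2 * (u 1 + u 2) by linarith]⟩
  · exact Or.inr (eq_smul_hAddE₁ hpos hanti h₁ h₂)

lemma exists_descent_add_three {n : ℕ} (hn : n ≤ 5) {u : Fin (n + 4) → ℤ} (hu : QZ (n + 3) u u = 0)
    (h₀ : 0 < u 0) (hpos : ∀ j : Fin (n + 3), 0 ≤ u j.succ)
    (hanti : Antitone fun j : Fin (n + 3) => u j.succ) :
    (∃ f : (Fin (n + 4) → ℤ) ≃ₗ[ℤ] (Fin (n + 4) → ℤ),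
      (bilinQZ (n + 3)).IsOrthogonal f ∧ |f u 0| < u 0) ∨ u = u 0 • hAddE₁ (n + 3) := by
  rw [QZ_self_eq_zero_iff] at hu
  simp only [Fin.sum_univ_succ, Fin.succ_zero_eq_one, Fin.succ_one_eq_two, ← add_assoc] at hu
  have h₁₂ : u 2 ≤ u 1 := by simpa using hanti (Fin.zero_le (1 : Fin (n + 3)))
  have h₂₃ : u (Fin.succ 2) ≤ u 2 := by
    simpa using hanti (show (1 : Fin (n + 3)) ≤ 2 by
      rw [Fin.le_iff_val_le_val, Fin.val_one, Fin.val_two]; omega)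
  have ht : 0 ≤ ∑ i : Fin n, u i.succ.succ.succ.succ ^ 2 :=
    Finset.sum_nonneg fun i _ => sq_nonneg _
  have ht₅ : ∑ i : Fin n, u i.succ.succ.succ.succ ^ 2 ≤ 5 * u (Fin.succ 2) ^ 2 := by
    have htail (i : Fin n) : u i.succ.succ.succ.succ ^ 2 ≤ u (Fin.succ 2) ^ 2 :=
      pow_le_pow_left₀ (hpos _) (hanti (show (2 : Fin (n + 3)) ≤ i.succ.succ.succ by
        rw [Fin.le_iff_val_le_val, Fin.val_two]; simp)) 2
    calc ∑ i : Fin n, u i.succ.succ.succ.succ ^ 2 ≤ n * u (Fin.succ 2) ^ 2 := by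
          simpa using Finset.sum_le_card_nsmul Finset.univ _ _ fun i _ => htail i
      _ ≤ 5 * u (Fin.succ 2) ^ 2 := by gcongr; exact_mod_cast hn
  rcases abs_two_mul_sub_lt_or_eq h₀ h₁₂ h₂₃ (hpos 2) ht ht₅ hu with hlt | ⟨h₁, h₂⟩
  · let r : Fin (n + 4) → ℤ := fun i => if (i : ℕ) < 4 then 1 else 0
    have hr (i : Fin n) : ¬((i : ℕ) + 1 + 1 + 1 + 1 < 4) := by omega
    have hrr : QZ (n + 3) r r = -2 := by simp [r, QZ, Fin.sum_univ_succ, hr]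
    have hru : QZ (n + 3) r u = u 0 - (u 1 + u 2 + u (Fin.succ 2)) := by
      simp [r, QZ, Fin.sum_univ_succ, hr, add_assoc]
    obtain ⟨f, hf, hfu⟩ := exists_isOrthogonal_mul_apply_zero (by rw [hrr]; decide) rfl u
    rw [hrr, hru] at hfu
    exact Or.inl ⟨f, hf, by rwa [show f u 0 = 2 * u 0 - (u 1 + u 2 + u (Fin.succ 2)) by linarith]⟩
  · exact Or.inr (eq_smul_hAddE₁ hpos hanti h₁ h₂)

lemma exists_descent (hN2 : 2 ≤ N) (hN8 : N ≤ 8) {u : Fin (N + 1) → ℤ} (hu : QZ N u u = 0)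
    (h₀ : 0 < u 0) (hpos : ∀ j : Fin N, 0 ≤ u j.succ) (hanti : Antitone fun j : Fin N => u j.succ) :
    (∃ f : (Fin (N + 1) → ℤ) ≃ₗ[ℤ] (Fin (N + 1) → ℤ), (bilinQZ N).IsOrthogonal f ∧ |f u 0| < u 0) ∨
      u = u 0 • hAddE₁ N := by
  obtain rfl | ⟨n, rfl⟩ : N = 2 ∨ ∃ n, N = n + 3 := by
    rcases hN2.eq_or_lt with h | h
    · exact Or.inl h.symm
    · exact Or.inr ⟨N - 3, by omega⟩
  · exact exists_descent_two hu h₀ hpos hanti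
  · exact exists_descent_add_three (by omega) hu h₀ hpos hanti

theorem sameOrbit_hSubE₁ (hN2 : 2 ≤ N) (hN8 : N ≤ 8) {w : Fin (N + 1) → ℤ}
    (hw : QZ N w w = 0) (hprim : IsPrimitive (R := ℤ) w) : SameOrbit N w (hSubE₁ N) := by
  induction h : (w 0).natAbs using Nat.strong_induction_on generalizing w with
  | _ n ih =>
  obtain ⟨f, hf, hf₀, hpos, hanti⟩ := exists_isOrthogonal_normalize w
  refine SameOrbit.of_isOrthogonal hf ?_
  have hu : QZ N (f w) (f w) = 0 := (hf w w).trans hw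
  have h₀ : 0 < f w 0 := hf₀ ▸ abs_pos.2 (apply_zero_ne_zero_of_QZ_self_eq_zero hw hprim.ne_zero)
  rcases exists_descent hN2 hN8 hu h₀ hpos hanti with ⟨g, hg, hlt⟩ | heq
  · refine SameOrbit.of_isOrthogonal hg (ih _ ?_ ((hg _ _).trans hu) ((hprim.map f).map g) rfl)
    rw [← h, ← Int.natAbs_abs (w 0), ← hf₀]
    have := abs_lt.1 hlt
    omega
  · have h₁ : f w 0 = 1 := by
      have := Int.isUnit_iff.1 ((hprim.map f) _ _ heq.symm)
      omega
    rw [heq, h₁, one_smul]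
    exact sameOrbit_hAddE₁_hSubE₁ (by omega)

/-- For `2 ≤ N ≤ 8`, `O(L,Q)` acts transitively on primitive isotropic
vectors of `⟨1⟩ ⊕ N⟨−1⟩`: every primitive isotropic `w` is mapped by some isometry
to `v = H − E₁ = (1, -1, 0, …, 0)`. -/
theorem stmt_9 (N : ℕ) (hN2 : 2 ≤ N) (hN8 : N ≤ 8)
    (w : Fin (N + 1) → ℤ) (hwiso : QZ N w w = 0)
    (hprim : ∀ (a : ℤ) (x : Fin (N + 1) → ℤ), a • x = w → IsUnit a) :
    ∃ f : (Fin (N + 1) → ℤ) ≃ₗ[ℤ] (Fin (N + 1) → ℤ),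
      (∀ x y, QZ N (f x) (f y) = QZ N x y) ∧
      f w = (fun i : Fin (N + 1) =>
        if i = 0 then 1 else if i = 1 then -1 else 0) :=
  sameOrbit_hSubE₁ hN2 hN8 hwiso hprim
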